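/- arXiv:1204.5059 — 5 statements merged into one kernel-verified Lean document; each statement's English description precedes it below -/
import Mathlib

section
/- For positive integers b ≤ n, every bipartite graph with n vertices on each side and at least (b−1)^{1/b}(n−b+1)n^{1−1/b} + (b−1)n + 1 edges contains a complete bipartite subgraph K_{b,b}. -/
/-!
Let `E` have `m` left and `n` right vertices and no `K_{b,b}`. Every `b`-set of right vertices
lies in the neighbourhood of at most `b - 1` left vertices, so double counting gives
`∑ₛ C(dₛ, b) ≤ (b - 1) C(n, b)`. Comparing `C(d, b) / C(n, b)` termwise with
`((d - b + 1) / (n - b + 1)) ^ b` and applying the power mean inequality to the total excess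
degree `Y = ∑ₛ (dₛ - b + 1)₊` gives `Y ^ b ≤ (b - 1) m ^ (b - 1) (n - b + 1) ^ b`, while
`#E ≤ Y + (b - 1) m`.
-/

open Finset

theorem Nat.pow_mul_choose_le_pow_mul_choose {d n b : ℕ} (hdn : d ≤ n) :
    (d + 1 - b) ^ b * n.choose b ≤ (n + 1 - b) ^ b * d.choose b := by
  rcases lt_or_ge d b with hdb | hbd
  · simp [Nat.sub_eq_zero_of_le hdb, Nat.pos_iff_ne_zero.1 (Nat.zero_lt_of_lt hdb)]
  suffices (d + 1 - b) ^ b * n.descFactorial b ≤ (n + 1 - b) ^ b * d.descFactorial b by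
    rw [descFactorial_eq_factorial_mul_choose, descFactorial_eq_factorial_mul_choose] at this
    nlinarith [b.factorial_pos]
  have pow_eq_prod (c : ℕ) : c ^ b = ∏ _i ∈ range b, c := by simp
  rw [descFactorial_eq_prod_range, descFactorial_eq_prod_range, pow_eq_prod, pow_eq_prod,
    ← prod_mul_distrib, ← prod_mul_distrib]
  refine prod_le_prod' fun i hi => ?_
  have hib := mem_range.1 hi
  -- `(n + 1 - b)(d - i) - (d + 1 - b)(n - i) = (n - d)(b - 1 - i)`
  zify [hbd.trans d.le_succ, (hbd.trans hdn).trans n.le_succ, hib.le.trans hbd,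
    (hib.le.trans hbd).trans hdn]
  nlinarith [mul_nonneg (by omega : (0 : ℤ) ≤ n - d) (by omega : (0 : ℤ) ≤ b - 1 - i)]

theorem Real.le_rpow_one_div_mul_of_pow_le {x c K : ℝ} {b : ℕ} (hx : 0 ≤ x) (hc : 0 ≤ c)
    (hK : 0 ≤ K) (hb : b ≠ 0) (h : x ^ b ≤ K * c ^ b) : x ≤ K ^ ((1 : ℝ) / b) * c := by
  rw [one_div, ← Real.pow_rpow_inv_natCast hc hb, ← Real.mul_rpow hK (pow_nonneg hc b),
    Real.le_rpow_inv_iff_of_pos hx (by positivity) (by positivity), Real.rpow_natCast]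
  exact h

section Biclique

variable {α β : Type*} [Fintype α] [Fintype β] [DecidableEq α] [DecidableEq β]

def HasBiclique (E : Finset (α × β)) (b : ℕ) : Prop :=
  ∃ (S : Finset α) (T : Finset β), #S = b ∧ #T = b ∧ ∀ s ∈ S, ∀ t ∈ T, (s, t) ∈ E

def rightNbhd (E : Finset (α × β)) (s : α) : Finset β := {t | (s, t) ∈ E}

variable {E : Finset (α × β)} {b : ℕ}

theorem card_eq_sum_card_rightNbhd (E : Finset (α × β)) : #E = ∑ s, #(rightNbhd E s) := by
  simp only [rightNbhd, card_filter]
  rw [← Fintype.sum_prod_type']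
  simp

theorem sum_choose_card_rightNbhd_le (h : ¬HasBiclique E b) :
    ∑ s, (#(rightNbhd E s)).choose b ≤ (b - 1) * (Fintype.card β).choose b := by
  let covers (s : α) (T : Finset β) : Prop := T ⊆ rightNbhd E s
  have few_covers (T) (hT : T ∈ powersetCard b univ) : #{s | covers s T} ≤ b - 1 := by
    by_contra! hlt
    obtain ⟨S, hS, hScard⟩ := exists_subset_card_eq (show b ≤ #{s | covers s T} by omega)
    refine h ⟨S, T, hScard, (mem_powersetCard.1 hT).2, fun s hs t ht => ?_⟩
    simpa [covers, rightNbhd] using (mem_filter.1 (hS hs)).2 ht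
  calc ∑ s, (#(rightNbhd E s)).choose b
      = ∑ s, #(bipartiteAbove covers (powersetCard b univ) s) := by
        refine sum_congr rfl fun s _ => ?_
        rw [← card_powersetCard]
        congr 1
        ext T
        simp [bipartiteAbove, covers, mem_powersetCard, and_comm]
    _ = ∑ T ∈ powersetCard b univ, #(bipartiteBelow covers univ T) :=
        sum_card_bipartiteAbove_eq_sum_card_bipartiteBelow covers
    _ ≤ #(powersetCard b (univ : Finset β)) • (b - 1) := sum_le_card_nsmul _ _ _ few_covers
    _ = (b - 1) * (Fintype.card β).choose b := by
        rw [card_powersetCard, card_univ, smul_eq_mul, mul_comm]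

theorem sum_pow_le_of_not_hasBiclique (hb : 0 < b) (hbn : b ≤ Fintype.card β)
    (h : ¬HasBiclique E b) :
    (∑ s, (#(rightNbhd E s) + 1 - b)) ^ b
      ≤ (b - 1) * Fintype.card α ^ (b - 1) * (Fintype.card β + 1 - b) ^ b := by
  set n := Fintype.card β
  have sum_pow : ∑ s, (#(rightNbhd E s) + 1 - b) ^ b ≤ (b - 1) * (n + 1 - b) ^ b := by
    refine Nat.le_of_mul_le_mul_right ?_ (Nat.choose_pos hbn)
    calc (∑ s, (#(rightNbhd E s) + 1 - b) ^ b) * n.choose b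
        ≤ ∑ s, (n + 1 - b) ^ b * (#(rightNbhd E s)).choose b := by
          rw [sum_mul]
          exact sum_le_sum fun s _ => Nat.pow_mul_choose_le_pow_mul_choose (card_le_univ _)
      _ ≤ (n + 1 - b) ^ b * ((b - 1) * n.choose b) := by
          rw [← mul_sum]
          exact Nat.mul_le_mul_left _ (sum_choose_card_rightNbhd_le h)
      _ = (b - 1) * (n + 1 - b) ^ b * n.choose b := by ring
  have jensen := pow_sum_le_card_mul_sum_pow (s := univ)
    (f := fun s => #(rightNbhd E s) + 1 - b) (fun _ _ => Nat.zero_le _) (b - 1)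
  rw [Nat.sub_add_cancel hb, card_univ] at jensen
  calc _ ≤ Fintype.card α ^ (b - 1) * ∑ s, (#(rightNbhd E s) + 1 - b) ^ b := jensen
    _ ≤ Fintype.card α ^ (b - 1) * ((b - 1) * (n + 1 - b) ^ b) := Nat.mul_le_mul_left _ sum_pow
    _ = _ := by ring

theorem card_le_of_not_hasBiclique (hb : 0 < b) (hbn : b ≤ Fintype.card β)
    (h : ¬HasBiclique E b) :
    (#E : ℝ) ≤ ((b : ℝ) - 1) ^ ((1 : ℝ) / b) * ((Fintype.card β : ℝ) - b + 1)
        * (Fintype.card α : ℝ) ^ (1 - (1 : ℝ) / b) + ((b : ℝ) - 1) * Fintype.card α := by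
  set m := Fintype.card α
  set n := Fintype.card β
  set Y := ∑ s, (#(rightNbhd E s) + 1 - b)
  have hb1 : (0 : ℝ) ≤ b - 1 := by
    rw [← Nat.cast_pred hb]; exact Nat.cast_nonneg _
  have hnb : ((n + 1 - b : ℕ) : ℝ) = n - b + 1 := by
    rw [Nat.cast_sub (hbn.trans n.le_succ)]; push_cast; ring
  have hYpow : (Y : ℝ) ^ b ≤ ((b : ℝ) - 1) * (m : ℝ) ^ (b - 1) * (n - b + 1) ^ b := by
    rw [← hnb, ← Nat.cast_pred hb]
    exact_mod_cast sum_pow_le_of_not_hasBiclique hb hbn h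
  have hY := Real.le_rpow_one_div_mul_of_pow_le (Nat.cast_nonneg Y) (hnb ▸ Nat.cast_nonneg _)
    (mul_nonneg hb1 (by positivity)) hb.ne' hYpow
  have hroot : (((b : ℝ) - 1) * (m : ℝ) ^ (b - 1)) ^ ((1 : ℝ) / b)
      = ((b : ℝ) - 1) ^ ((1 : ℝ) / b) * (m : ℝ) ^ (1 - (1 : ℝ) / b) := by
    rw [Real.mul_rpow hb1 (by positivity), ← Real.rpow_natCast, ← Real.rpow_mul (by positivity),
      Nat.cast_pred hb]
    congr 2
    field_simp
  have hE : #E ≤ Y + (b - 1) * m :=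
    calc #E = ∑ s, #(rightNbhd E s) := card_eq_sum_card_rightNbhd E
      _ ≤ ∑ s, ((#(rightNbhd E s) + 1 - b) + (b - 1)) := sum_le_sum fun s _ => by omega
      _ = Y + (b - 1) * m := by rw [sum_add_distrib, sum_const, card_univ, smul_eq_mul, mul_comm]
  have hER : (#E : ℝ) ≤ Y + ((b : ℝ) - 1) * m := by
    rw [← Nat.cast_pred hb]
    exact_mod_cast hE
  rw [hroot] at hY
  linarith

end Biclique

/-- **Kővári–Sós–Turán.** For positive integers `b ≤ n`, every bipartite graph with
`n` vertices on each side and at least `(b-1)^{1/b}(n-b+1)n^{1-1/b} + (b-1)n + 1` edges contains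
a complete bipartite subgraph `K_{b,b}`. -/
theorem kovari_sos_turan (b n : ℕ) (hb : 0 < b) (hbn : b ≤ n)
    (E : Finset (Fin n × Fin n))
    (hE : ((b : ℝ) - 1) ^ ((1 : ℝ) / b) * ((n : ℝ) - b + 1) * (n : ℝ) ^ (1 - (1 : ℝ) / b)
        + ((b : ℝ) - 1) * n + 1 ≤ (E.card : ℝ)) :
    ∃ S T : Finset (Fin n), S.card = b ∧ T.card = b ∧
      ∀ s ∈ S, ∀ t ∈ T, (s, t) ∈ E := by
  by_contra h
  have := card_le_of_not_hasBiclique hb (by simpa using hbn) h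
  simp only [Fintype.card_fin] at this
  linarith
end

section
/- If Y ≥ e³X³ and N = X² − X + 1, then (1 − (N−1)/Y) / (1 − (1 − (1 − (N−1)/Y))·e²) ≤ e^{1/X}; that is, with p_N = 1 − (N−1)/Y, we have p_N/(1 − (1−p_N)e²) ≤ e^{1/X}. -/
/-!
With `q = 1 - p = (N - 1)/Y` and `b = 1/X`, the hypothesis on `Y` gives `q e³ ≤ b`, i.e.
`q e² ≤ b/e`. Dropping `q` from the numerator, the ratio is at most `1/(1 - b/e)`, and
`e^b (1 - b/e) ≥ (1 + b)(1 - b/e) ≥ 1` as long as `1 + b ≤ e`.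
-/

open Real

lemma one_le_exp_mul_one_sub_div_exp_one {b : ℝ} (hb₀ : 0 ≤ b) (hb : b + 1 ≤ exp 1) :
    1 ≤ exp b * (1 - b / exp 1) := by
  have he : 0 < exp 1 := exp_pos 1
  have hlin : 0 ≤ 1 - b / exp 1 := by rw [sub_nonneg, div_le_one he]; linarith
  calc 1 ≤ (b + 1) * (1 - b / exp 1) := by
        field_simp
        nlinarith
    _ ≤ exp b * (1 - b / exp 1) := by gcongr; exact add_one_le_exp b

lemma one_sub_div_one_sub_mul_exp_two_le_exp {q b : ℝ} (hq : 0 ≤ q) (hqb : q * exp 3 ≤ b)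
    (hb : b + 1 ≤ exp 1) : (1 - q) / (1 - q * exp 2) ≤ exp b := by
  have hb₀ : 0 ≤ b := le_trans (by positivity) hqb
  have he : 0 < exp 1 := exp_pos 1
  have hqe : q * exp 2 ≤ b / exp 1 := by
    rwa [le_div_iff₀ he, mul_assoc, ← exp_add, show (2 : ℝ) + 1 = 3 by norm_num]
  have hden : 0 < 1 - b / exp 1 := by rw [sub_pos, div_lt_one he]; linarith
  calc (1 - q) / (1 - q * exp 2) ≤ 1 / (1 - b / exp 1) := by
        gcongr
        linarith
    _ ≤ exp b := by
        rw [div_le_iff₀ hden]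
        exact one_le_exp_mul_one_sub_div_exp_one hb₀ hb

/-- If `Y ≥ e³X³` and `N = X² - X + 1`, then with `p_N = 1 - (N-1)/Y` we have
`p_N / (1 - (1 - p_N)·e²) ≤ e^{1/X}`. -/
theorem pN_ratio_le (X Y : ℝ) (hX : 1 ≤ X) (hY : Real.exp 3 * X ^ 3 ≤ Y)
    (N : ℝ) (hN : N = X ^ 2 - X + 1)
    (p : ℝ) (hp : p = 1 - (N - 1) / Y) :
    p / (1 - (1 - p) * Real.exp 2) ≤ Real.exp (1 / X) := by
  have hX₀ : 0 < X := by linarith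
  have hY₀ : 0 < Y := lt_of_lt_of_le (by positivity) hY
  have hN₁ : N - 1 = X * (X - 1) := by rw [hN]; ring
  have hq : 0 ≤ (N - 1) / Y := by rw [hN₁]; exact div_nonneg (by nlinarith) hY₀.le
  have hqb : (N - 1) / Y * exp 3 ≤ 1 / X := by
    rw [div_mul_eq_mul_div, div_le_div_iff₀ hY₀ hX₀, hN₁]
    nlinarith [exp_pos 3]
  have hb : 1 / X + 1 ≤ exp 1 := by
    have : 1 / X ≤ 1 := by rwa [div_le_one hX₀]
    linarith [exp_one_gt_d9]
  have := one_sub_div_one_sub_mul_exp_two_le_exp hq hqb hb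
  rwa [hp, sub_sub_cancel]
end

section
/- In the coupon collector process with Y ≥ e³X³ distinct coupon types, each round yielding a uniformly random coupon independently, the number of rounds z needed to collect N = X² − X + 1 distinct coupons satisfies P(z > X²) ≤ exp(−(X−2)). -/
/-!
If the first `n = X²` draws take at most `n - X` distinct values, then at least `X` of them
repeat an earlier draw. Choosing `X` such positions and writing at each of them the index of the
first occurrence of its value instead of the value itself encodes the sequence injectively
(it is recovered from left to right), so at most `C(n, X) nˣ Yⁿ⁻ˣ` of the `Yⁿ` equally likely
sequences are bad. Hence the probability is at most
`C(n, X) (n / Y)ˣ ≤ (Xˣ / X!) (X³ / Y)ˣ ≤ eˣ e⁻³ˣ`.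
-/

open MeasureTheory ProbabilityTheory Finset

section RepeatIndices

variable {α : Type*} [DecidableEq α] {n : ℕ}

def firstIndex (v : Fin n → α) (i : Fin n) : Fin n :=
  (univ.filter fun j => v j = v i).min' ⟨i, by simp⟩

lemma apply_firstIndex (v : Fin n → α) (i : Fin n) : v (firstIndex v i) = v i :=
  (mem_filter.1 (min'_mem (univ.filter fun j => v j = v i) _)).2

lemma firstIndex_le (v : Fin n → α) (i : Fin n) : firstIndex v i ≤ i :=
  min'_le _ _ (by simp)

lemma firstIndex_congr {v : Fin n → α} {i j : Fin n} (h : v i = v j) :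
    firstIndex v i = firstIndex v j := by
  simp only [firstIndex, h]

lemma firstIndex_firstIndex (v : Fin n → α) (i : Fin n) :
    firstIndex v (firstIndex v i) = firstIndex v i :=
  firstIndex_congr (apply_firstIndex v i)

def repeatIndices (v : Fin n → α) : Finset (Fin n) :=
  univ.filter fun i => firstIndex v i < i

lemma card_image_add_card_repeatIndices (v : Fin n → α) :
    #(univ.image v) + #(repeatIndices v) = n := by
  have hfirst : ∀ i, i ∈ (repeatIndices v)ᶜ ↔ firstIndex v i = i := fun i => by
    simp [repeatIndices, (firstIndex_le v i).ge_iff_eq]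
  have himage : univ.image v = (repeatIndices v)ᶜ.image v := by
    refine (image_subset_image (subset_univ _)).antisymm' fun a ha => ?_
    obtain ⟨i, -, rfl⟩ := mem_image.1 ha
    exact mem_image.2 ⟨firstIndex v i, (hfirst _).2 (firstIndex_firstIndex v i),
      apply_firstIndex v i⟩
  have hinj : Set.InjOn v ↑(repeatIndices v)ᶜ := fun i hi j hj h => by
    rw [← (hfirst i).1 hi, ← (hfirst j).1 hj, firstIndex_congr h]
  rw [himage, card_image_of_injOn hinj, card_compl_add_card, Fintype.card_fin]

def repeatCode (S : Finset (Fin n)) (v : Fin n → α) : Fin n → Fin n ⊕ α :=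
  fun i => if i ∈ S then .inl (firstIndex v i) else .inr (v i)

lemma repeatCode_injOn (S : Finset (Fin n)) :
    Set.InjOn (repeatCode S) {v : Fin n → α | S ⊆ repeatIndices v} := by
  intro v hv w hw h
  funext i
  induction i using WellFoundedLT.induction with
  | _ i ih =>
    have hi := congrFun h i
    by_cases hS : i ∈ S
    · simp only [repeatCode, hS, if_true, Sum.inl.injEq] at hi
      have hlt : firstIndex v i < i := (mem_filter.1 (hv hS)).2
      calc v i = v (firstIndex v i) := (apply_firstIndex v i).symm
        _ = w (firstIndex w i) := by rw [ih _ hlt, hi]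
        _ = w i := apply_firstIndex w i
    · simpa [repeatCode, hS] using hi

variable [Fintype α]

lemma card_filter_subset_repeatIndices_le (S : Finset (Fin n)) :
    #(univ.filter fun v : Fin n → α => S ⊆ repeatIndices v) ≤
      n ^ #S * Fintype.card α ^ (n - #S) := by
  let codes : Finset (Fin n → Fin n ⊕ α) :=
    Fintype.piFinset fun i => if i ∈ S then univ.image .inl else univ.image .inr
  have hcodes : #codes = n ^ #S * Fintype.card α ^ (n - #S) := by
    simp only [codes, Fintype.card_piFinset, apply_ite card,
      card_image_of_injective _ Sum.inl_injective, card_image_of_injective _ Sum.inr_injective,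
      prod_ite, prod_const, filter_mem_eq_inter, univ_inter, filter_not, card_univ_sdiff,
      card_univ, Fintype.card_fin]
  refine hcodes ▸ card_le_card_of_injOn (repeatCode S) (fun v _ => ?_) ?_
  · rw [mem_coe, Fintype.mem_piFinset]
    intro i
    by_cases hS : i ∈ S <;> simp [repeatCode, hS]
  · simpa using repeatCode_injOn (α := α) S

lemma card_filter_card_image_add_le (k : ℕ) :
    #(univ.filter fun v : Fin n → α => #(univ.image v) + k ≤ n) ≤
      n.choose k * (n ^ k * Fintype.card α ^ (n - k)) := by
  calc _ ≤ #((univ.powersetCard k).biUnion fun S =>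
          univ.filter fun v : Fin n → α => S ⊆ repeatIndices v) := by
        refine card_le_card fun v hv => ?_
        have hk : k ≤ #(repeatIndices v) := by
          have := card_image_add_card_repeatIndices v
          simp only [mem_filter, mem_univ, true_and] at hv
          omega
        obtain ⟨S, hSv, hS⟩ := exists_subset_card_eq hk
        exact mem_biUnion.2 ⟨S, mem_powersetCard.2 ⟨subset_univ S, hS⟩, by simpa using hSv⟩
    _ ≤ #(univ.powersetCard k) * (n ^ k * Fintype.card α ^ (n - k)) :=
        card_biUnion_le_card_mul _ _ _ fun S hS =>
          (mem_powersetCard.1 hS).2 ▸ card_filter_subset_repeatIndices_le S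
    _ = _ := by rw [card_powersetCard, card_univ, Fintype.card_fin]

end RepeatIndices

section UniformSample

variable {Ω α : Type*} [MeasurableSpace Ω] {μ : Measure Ω} [IsFiniteMeasure μ]
  [Fintype α] [MeasurableSpace α] [MeasurableSingletonClass α]

lemma measureReal_pi_mem_eq {ι : Type*} [Fintype ι] {c : ι → Ω → α}
    (hmeas : ∀ i, Measurable (c i)) (hindep : iIndepFun c μ)
    (hunif : ∀ i y, μ.real {ω | c i ω = y} = 1 / Fintype.card α) (B : Finset (ι → α)) :
    μ.real {ω | (fun i => c i ω) ∈ B} = #B / Fintype.card α ^ Fintype.card ι := by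
  set sample : Ω → ι → α := fun ω i => c i ω
  have hsingleton : ∀ v, μ.real (sample ⁻¹' {v}) = (1 / Fintype.card α) ^ Fintype.card ι := by
    intro v
    have hfiber : sample ⁻¹' {v} = ⋂ i, c i ⁻¹' {v i} := by
      ext ω
      simp [sample, funext_iff]
    rw [hfiber, measureReal_def,
      hindep.meas_iInter fun i => ⟨{v i}, measurableSet_singleton _, rfl⟩, ENNReal.toReal_prod]
    have hfactor : ∀ i, (μ (c i ⁻¹' {v i})).toReal = 1 / Fintype.card α := fun i => hunif i (v i)
    simp only [hfactor, prod_const, card_univ]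
  have hsample : Measurable sample := measurable_pi_lambda _ hmeas
  rw [show {ω | sample ω ∈ B} = sample ⁻¹' B from rfl,
    ← sum_measureReal_preimage_singleton B fun v _ => hsample (measurableSet_singleton v)]
  simp [hsingleton, div_eq_mul_inv]

lemma measureReal_card_image_range_add_le_le [Nonempty α] [DecidableEq α] {c : ℕ → Ω → α}
    (hmeas : ∀ i, Measurable (c i)) (hindep : iIndepFun c μ)
    (hunif : ∀ i y, μ.real {ω | c i ω = y} = 1 / Fintype.card α) {n k : ℕ} (hk : k ≤ n) :
    μ.real {ω | #((range n).image (c · ω)) + k ≤ n} ≤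
      n.choose k * ((n : ℝ) / Fintype.card α) ^ k := by
  have hevent : {ω | #((range n).image (c · ω)) + k ≤ n} =
      {ω | (fun i : Fin n => c i ω) ∈
        univ.filter fun v : Fin n → α => #(univ.image v) + k ≤ n} := by
    ext ω
    simp [← image_fin_univ, image_image, Function.comp_def]
  have hα : (0 : ℝ) < Fintype.card α := by exact_mod_cast Fintype.card_pos
  rw [hevent, measureReal_pi_mem_eq (c := fun i : Fin n => c i) (fun i => hmeas i)
    (hindep.precomp Fin.val_injective) (fun i => hunif i), Fintype.card_fin,
    div_le_iff₀ (by positivity)]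
  calc _ ≤ ((n.choose k * (n ^ k * Fintype.card α ^ (n - k)) : ℕ) : ℝ) := by
        exact_mod_cast card_filter_card_image_add_le k
    _ = n.choose k * ((n : ℝ) / Fintype.card α) ^ k * Fintype.card α ^ n := by
        obtain ⟨m, rfl⟩ := Nat.exists_eq_add_of_le hk
        rw [Nat.add_sub_cancel_left, pow_add, div_pow]
        field_simp
        push_cast
        ring

end UniformSample

open Real in
lemma choose_sq_mul_div_pow_le_exp (X : ℕ) {Y : ℝ} (hY0 : 0 < Y) (hY : exp 3 * X ^ 3 ≤ Y) :
    ((X ^ 2).choose X : ℝ) * (((X ^ 2 : ℕ) : ℝ) / Y) ^ X ≤ exp (-(2 * X)) := by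
  have hratio : (X : ℝ) ^ 3 / Y ≤ exp (-3) := by
    rw [div_le_iff₀ hY0, exp_neg, ← div_eq_inv_mul, le_div_iff₀ (exp_pos 3)]
    linarith
  calc _ ≤ ((X ^ 2 : ℕ) : ℝ) ^ X / X.factorial * (((X ^ 2 : ℕ) : ℝ) / Y) ^ X := by
        gcongr
        exact Nat.choose_le_pow_div X (X ^ 2)
    _ = (X : ℝ) ^ X / X.factorial * ((X : ℝ) ^ 3 / Y) ^ X := by
        push_cast
        field_simp
        ring
    _ ≤ exp X * exp (-3) ^ X := by
        gcongr
        exact pow_div_factorial_le_exp _ X.cast_nonneg X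
    _ = exp (-(2 * X)) := by
        rw [← exp_nat_mul, ← exp_add]
        ring_nf

theorem coupon_collector_tail_general
    {Ω : Type*} [MeasurableSpace Ω] (μ : Measure Ω) [IsProbabilityMeasure μ]
    (X Y : ℕ) (hYpos : 0 < Y)
    (hY : Real.exp 3 * (X : ℝ) ^ 3 ≤ (Y : ℝ))
    (c : ℕ → Ω → Fin Y)
    (hmeas : ∀ i, Measurable (c i))
    (hindep : iIndepFun c μ)
    (hunif : ∀ i, ∀ y : Fin Y, (μ {ω | c i ω = y}).toReal = 1 / (Y : ℝ)) :
    (μ {ω | ((Finset.range (X ^ 2)).image (fun i => c i ω)).card < X ^ 2 - X + 1}).toReal ≤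
      Real.exp (-((X : ℝ) - 2)) := by
  have hXn : X ≤ X ^ 2 := Nat.le_self_pow two_ne_zero X
  have : Nonempty (Fin Y) := Fin.pos_iff_nonempty.1 hYpos
  have hevent : {ω | #((range (X ^ 2)).image (c · ω)) < X ^ 2 - X + 1} =
      {ω | #((range (X ^ 2)).image (c · ω)) + X ≤ X ^ 2} := by
    ext ω
    simp only [Set.mem_ofPred_eq]
    omega
  calc _ = μ.real {ω | #((range (X ^ 2)).image (c · ω)) + X ≤ X ^ 2} := by rw [hevent]; rfl
    _ ≤ (X ^ 2).choose X * (((X ^ 2 : ℕ) : ℝ) / Fintype.card (Fin Y)) ^ X :=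
        measureReal_card_image_range_add_le_le hmeas hindep
          (fun i y => by rw [Fintype.card_fin]; exact hunif i y) hXn
    _ ≤ Real.exp (-(2 * X)) := by
        rw [Fintype.card_fin]
        exact choose_sq_mul_div_pow_le_exp X (by exact_mod_cast hYpos) hY
    _ ≤ Real.exp (-((X : ℝ) - 2)) := Real.exp_le_exp.2 (by linarith [(X.cast_nonneg : (0 : ℝ) ≤ X)])

/-- **coupon collector tail.** With `Y ≥ e³X³` coupon types and i.i.d. uniform
draws `c 0, c 1, …`, the probability that fewer than `N = X² - X + 1` distinct coupons have been
collected after `X²` rounds (i.e. that the collection time `z` of `N` distinct coupons exceeds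
`X²`) is at most `exp(-(X-2))`. -/
theorem coupon_collector_tail
    {Ω : Type*} [MeasurableSpace Ω] (μ : Measure Ω) [IsProbabilityMeasure μ]
    (X Y : ℕ) (hX : 1 ≤ X) (hYpos : 0 < Y)
    (hY : Real.exp 3 * (X : ℝ) ^ 3 ≤ (Y : ℝ))
    (c : ℕ → Ω → Fin Y)
    (hmeas : ∀ i, Measurable (c i))
    (hindep : iIndepFun c μ)
    (hunif : ∀ i, ∀ y : Fin Y, (μ {ω | c i ω = y}).toReal = 1 / (Y : ℝ)) :
    (μ {ω | ((Finset.range (X ^ 2)).image (fun i => c i ω)).card < X ^ 2 - X + 1}).toReal ≤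
      Real.exp (-((X : ℝ) - 2)) :=
  coupon_collector_tail_general μ X Y hYpos hY c hmeas hindep hunif
end

section
/- Fix a c-balanced target function A with partition W₁, W₂ and a fixed U×U ordered submatrix position pattern. Let the U² entries of the submatrix S be i.i.d. uniform over an alphabet of size Y. Then the probability that S is a valid zero-error code for A (i.e., the sets of values of S at positions a⁻¹(W₁) and at positions a⁻¹(W₂) are disjoint) is at most 2·exp(−min{cU²/6, c²U⁴/(3Y)}). -/
open Finset

/-!
Let `A₁ = a⁻¹(W₁)`, `A₂ = a⁻¹(W₂)` and `m = ⌊min {Y/3, cU²/3}⌋`. Either `S` takes at most `m`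
values on `A₁`, which happens for at most `C(Y, m) m^|A₁| Y^|A₂|` matrices, and
`C(Y, m) (m/Y)^|A₁| ≤ eᵐ (m/Y)^(|A₁| - m) ≤ exp(-|A₁|/6)` since `m/Y ≤ 1/3 ≤ e^(-3/4)` and
`3m ≤ |A₁|`; or it takes more than `m` values there, and then every entry on `A₂` avoids them,
which has probability at most `(1 - (m+1)/Y)^|A₂| ≤ exp(-|A₂|(m+1)/Y)`.
-/

theorem card_piFinset_ite {α β : Type*} [Fintype α] [DecidableEq α] (A : Finset α)
    (s t : α → Finset β) :
    #(Fintype.piFinset fun p => if p ∈ A then s p else t p) =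
      (∏ p ∈ A, #(s p)) * ∏ p ∈ Aᶜ, #(t p) := by
  rw [Fintype.card_piFinset, prod_apply_ite]
  congr 2 <;> ext <;> simp

section Counting

variable {α β : Type*} [Fintype α] [DecidableEq α] [Fintype β] [DecidableEq β]

theorem card_filter_card_image_le (A : Finset α) {m : ℕ} (hm : m ≤ Fintype.card β) :
    #{S : α → β | #(A.image S) ≤ m} ≤
      (Fintype.card β).choose m * (m ^ #A * Fintype.card β ^ #Aᶜ) := by
  have hcover : ({S : α → β | #(A.image S) ≤ m} : Finset _) ⊆
      (powersetCard m (univ : Finset β)).biUnion fun T =>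
        Fintype.piFinset fun p => if p ∈ A then T else univ := by
    intro S hS
    obtain ⟨T, hST, -, hT⟩ :=
      exists_subsuperset_card_eq (subset_univ (A.image S)) (mem_filter.mp hS).2
        (by rwa [card_univ])
    refine mem_biUnion.mpr ⟨T, mem_powersetCard_univ.mpr hT, Fintype.mem_piFinset.mpr ?_⟩
    intro p
    split_ifs with hp
    · exact hST (mem_image_of_mem S hp)
    · exact mem_univ _
  refine (card_le_card hcover).trans (card_biUnion_le.trans ?_)
  rw [← card_univ (α := β), ← card_powersetCard]
  refine sum_le_card_nsmul _ _ _ fun T hT => ?_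
  rw [card_piFinset_ite, prod_const, prod_const, (mem_powersetCard_univ.mp hT)]

theorem card_filter_lt_card_image_disjoint_le (A : Finset α) (m : ℕ) :
    #{S : α → β | m < #(A.image S) ∧ Disjoint (A.image S) (Aᶜ.image S)} ≤
      Fintype.card β ^ #A * (Fintype.card β - (m + 1)) ^ #Aᶜ := by
  set E := ({S : α → β | m < #(A.image S) ∧ Disjoint (A.image S) (Aᶜ.image S)} : Finset _)
  let restrict : (α → β) → (A → β) := fun S p => S p
  have hfiber : ∀ r ∈ E.image restrict, #{S ∈ E | restrict S = r} ≤
      (Fintype.card β - (m + 1)) ^ #Aᶜ := by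
    intro r hr
    obtain ⟨S₀, hS₀, rfl⟩ := mem_image.mp hr
    have hsub : {S ∈ E | restrict S = restrict S₀} ⊆
        Fintype.piFinset fun p => if p ∈ A then {S₀ p} else (A.image S₀)ᶜ := by
      intro S hS
      obtain ⟨hSE, hSr⟩ := mem_filter.mp hS
      have hagree : ∀ p ∈ A, S p = S₀ p := fun p hp => congrFun hSr ⟨p, hp⟩
      have himage : A.image S = A.image S₀ := image_congr hagree
      refine Fintype.mem_piFinset.mpr fun p => ?_
      split_ifs with hp
      · exact mem_singleton.mpr (hagree p hp)
      · rw [mem_compl, ← himage]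
        exact disjoint_right.mp (mem_filter.mp hSE).2.2 (mem_image_of_mem S (mem_compl.mpr hp))
    refine (card_le_card hsub).trans ?_
    simp only [card_piFinset_ite, card_singleton, prod_const_one, one_mul, prod_const,
      card_compl]
    exact Nat.pow_le_pow_left (Nat.sub_le_sub_left (mem_filter.mp hS₀).2.1 _) _
  refine (card_le_mul_card_image E _ hfiber).trans ?_
  rw [mul_comm]
  refine Nat.mul_le_mul_right _ ((card_le_univ _).trans ?_)
  simp

theorem card_filter_disjoint_image_le (A : Finset α) {m : ℕ} (hm : m ≤ Fintype.card β) :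
    #{S : α → β | Disjoint (A.image S) (Aᶜ.image S)} ≤
      (Fintype.card β).choose m * (m ^ #A * Fintype.card β ^ #Aᶜ) +
        Fintype.card β ^ #A * (Fintype.card β - (m + 1)) ^ #Aᶜ := by
  rw [← card_filter_add_card_filter_not (fun S : α → β => #(A.image S) ≤ m)]
  gcongr ?_ + ?_
  · refine le_trans (card_le_card fun S hS => ?_) (card_filter_card_image_le A hm)
    simp only [mem_filter, mem_univ, true_and] at hS ⊢
    exact hS.2
  · refine le_trans (card_le_card fun S hS => ?_) (card_filter_lt_card_image_disjoint_le A m)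
    simp only [mem_filter, mem_univ, true_and, not_le] at hS ⊢
    exact ⟨hS.2, hS.1⟩

theorem card_filter_disjoint_image_div_le (A : Finset α) {m : ℕ} (hm : m < Fintype.card β) :
    (#{S : α → β | Disjoint (A.image S) (Aᶜ.image S)} : ℝ) / Fintype.card β ^ Fintype.card α ≤
      (Fintype.card β).choose m * ((m : ℝ) / Fintype.card β) ^ #A +
        (1 - ((m : ℝ) + 1) / Fintype.card β) ^ #Aᶜ := by
  set Y := Fintype.card β
  have hY : (0 : ℝ) < Y := by exact_mod_cast (Nat.zero_le m).trans_lt hm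
  have hcount := card_filter_disjoint_image_le (β := β) A hm.le
  rw [← card_add_card_compl A, pow_add, div_le_iff₀ (by positivity)]
  have hsub : ((Y - (m + 1) : ℕ) : ℝ) = Y - (m + 1) := by push_cast [Nat.cast_sub hm]; ring
  calc (_ : ℝ) ≤ ((Y.choose m * (m ^ #A * Y ^ #Aᶜ) + Y ^ #A * (Y - (m + 1)) ^ #Aᶜ : ℕ) : ℝ) :=
        mod_cast hcount
    _ = _ := by
        have hcompl : 1 - ((m : ℝ) + 1) / Y = (Y - (m + 1)) / Y := by field_simp
        push_cast [hsub]
        rw [hcompl, div_pow, div_pow]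
        field_simp

end Counting

theorem choose_mul_div_pow_self_le_exp (Y m : ℕ) :
    (Y.choose m : ℝ) * ((m : ℝ) / Y) ^ m ≤ Real.exp m := by
  calc (Y.choose m : ℝ) * ((m : ℝ) / Y) ^ m
      ≤ (Y : ℝ) ^ m / m.factorial * ((m : ℝ) ^ m / (Y : ℝ) ^ m) := by
        rw [div_pow]; gcongr; exact Nat.choose_le_pow_div m Y
    _ = (m : ℝ) ^ m / m.factorial * ((Y : ℝ) ^ m / (Y : ℝ) ^ m) := by ring
    _ ≤ (m : ℝ) ^ m / m.factorial * 1 := by gcongr; exact div_self_le_one _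
    _ ≤ Real.exp m := by rw [mul_one]; exact Real.pow_div_factorial_le_exp _ (Nat.cast_nonneg m) m

theorem choose_mul_div_pow_le_exp_neg {Y m n : ℕ} (hY : 3 * m ≤ Y) (hn : 3 * m ≤ n) :
    (Y.choose m : ℝ) * ((m : ℝ) / Y) ^ n ≤ Real.exp (-(n / 6)) := by
  have hmn : m ≤ n := by omega
  have hratio : (m : ℝ) / Y ≤ Real.exp (-(3 / 4)) := by
    have hthird : (1 : ℝ) / 3 ≤ Real.exp (-(3 / 4)) := by
      rw [Real.exp_neg, one_div]
      gcongr
      exact (Real.exp_le_exp.mpr (by norm_num)).trans Real.exp_one_lt_three.le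
    refine le_trans (div_le_of_le_mul₀ (Nat.cast_nonneg _) (by norm_num) ?_) hthird
    rw [one_div_mul_eq_div, le_div_iff₀ (by norm_num)]
    exact_mod_cast (by omega : m * 3 ≤ Y)
  calc (Y.choose m : ℝ) * ((m : ℝ) / Y) ^ n
      = (Y.choose m : ℝ) * ((m : ℝ) / Y) ^ m * ((m : ℝ) / Y) ^ (n - m) := by
        rw [mul_assoc, ← pow_add, Nat.add_sub_cancel' hmn]
    _ ≤ Real.exp m * Real.exp (-(3 / 4)) ^ (n - m) := by
        gcongr
        exact choose_mul_div_pow_self_le_exp Y m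
    _ = Real.exp (m - 3 / 4 * ((n : ℝ) - m)) := by
        rw [← Real.exp_nat_mul, ← Real.exp_add, Nat.cast_sub hmn]; ring_nf
    _ ≤ Real.exp (-(n / 6)) := by
        gcongr
        have : (3 : ℝ) * m ≤ n := by exact_mod_cast hn
        linarith

theorem one_sub_pow_le_exp_neg_mul {x : ℝ} (hx : x ≤ 1) (n : ℕ) :
    (1 - x) ^ n ≤ Real.exp (-(n * x)) := by
  rw [neg_mul_eq_mul_neg, Real.exp_nat_mul]
  exact pow_le_pow_left₀ (by linarith) (Real.one_sub_le_exp_neg x) n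

theorem choose_mul_div_pow_add_one_sub_pow_le {Y n₁ n₂ m : ℕ} {x : ℝ} (hY : 0 < Y)
    (hx : 0 ≤ x) (hn₁ : x ≤ n₁) (hn₂ : x ≤ n₂) (hmY : 3 * m ≤ Y) (hmx : 3 * (m : ℝ) ≤ x)
    (hm : min ((Y : ℝ) / 3) (x / 3) < m + 1) :
    (Y.choose m : ℝ) * ((m : ℝ) / Y) ^ n₁ + (1 - ((m : ℝ) + 1) / Y) ^ n₂ ≤
      2 * Real.exp (-(min (x / 6) (x ^ 2 / (3 * Y)))) := by
  set M := min (x / 6) (x ^ 2 / (3 * Y))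
  have hmn₁ : 3 * m ≤ n₁ := by exact_mod_cast hmx.trans hn₁
  have hM : M ≤ n₂ * (((m : ℝ) + 1) / Y) :=
    calc M ≤ min (x / 3) (x ^ 2 / (3 * Y)) := min_le_min (by linarith) le_rfl
      _ = x * (min ((Y : ℝ) / 3) (x / 3) / Y) := by
          rw [← min_div_div_right (Nat.cast_nonneg Y), mul_min_of_nonneg _ _ hx]
          congr 1 <;> field_simp
      _ ≤ n₂ * (((m : ℝ) + 1) / Y) := by gcongr
  have h₁ : (Y.choose m : ℝ) * ((m : ℝ) / Y) ^ n₁ ≤ Real.exp (-M) :=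
    (choose_mul_div_pow_le_exp_neg hmY hmn₁).trans
      (Real.exp_le_exp.mpr (by linarith [min_le_left (x / 6) (x ^ 2 / (3 * Y))]))
  have h₂ : (1 - ((m : ℝ) + 1) / Y) ^ n₂ ≤ Real.exp (-M) :=
    (one_sub_pow_le_exp_neg_mul
      (div_le_one_of_le₀ (by exact_mod_cast (by omega : m + 1 ≤ Y)) (Nat.cast_nonneg Y))
      n₂).trans (Real.exp_le_exp.mpr (neg_le_neg hM))
  linarith

theorem valid_code_probability_general
    (U Y W : ℕ) (hY : 0 < Y) (c : ℝ) (hc0 : 0 < c)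
    (a : Fin U → Fin U → Fin W)
    (W₁ W₂ : Finset (Fin W)) (hdisj : Disjoint W₁ W₂) (hunion : W₁ ∪ W₂ = Finset.univ)
    (hbal₁ : c * (U : ℝ) ^ 2 ≤
      ((Finset.univ.filter (fun p : Fin U × Fin U => a p.1 p.2 ∈ W₁)).card : ℝ))
    (hbal₂ : c * (U : ℝ) ^ 2 ≤
      ((Finset.univ.filter (fun p : Fin U × Fin U => a p.1 p.2 ∈ W₂)).card : ℝ)) :
    (Nat.card {S : Fin U × Fin U → Fin Y //
        Disjoint
          ((Finset.univ.filter (fun p : Fin U × Fin U => a p.1 p.2 ∈ W₁)).image S)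
          ((Finset.univ.filter (fun p : Fin U × Fin U => a p.1 p.2 ∈ W₂)).image S)} : ℝ) /
        (Y : ℝ) ^ (U ^ 2) ≤
      2 * Real.exp (-(min (c * (U : ℝ) ^ 2 / 6) (c ^ 2 * (U : ℝ) ^ 4 / (3 * (Y : ℝ))))) := by
  classical
  set A₁ := univ.filter fun p : Fin U × Fin U => a p.1 p.2 ∈ W₁
  have hW₂ : W₂ = W₁ᶜ := (IsCompl.compl_eq ⟨hdisj, codisjoint_iff.mpr hunion⟩).symm
  have hA₂ : univ.filter (fun p : Fin U × Fin U => a p.1 p.2 ∈ W₂) = A₁ᶜ := by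
    ext p
    simp [A₁, hW₂]
  rw [hA₂] at hbal₂ ⊢
  rw [Nat.card_eq_fintype_card, Fintype.card_subtype,
    show c ^ 2 * (U : ℝ) ^ 4 = (c * U ^ 2) ^ 2 by ring]
  set N := min ((Y : ℝ) / 3) (c * (U : ℝ) ^ 2 / 3)
  have hmN : (⌊N⌋₊ : ℝ) ≤ N := Nat.floor_le (by positivity)
  have hmY : 3 * ⌊N⌋₊ ≤ Y := by
    have : (3 * ⌊N⌋₊ : ℝ) ≤ Y := by linarith [min_le_left ((Y : ℝ) / 3) (c * (U : ℝ) ^ 2 / 3)]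
    exact_mod_cast this
  have hcount := card_filter_disjoint_image_div_le (β := Fin Y) A₁ (m := ⌊N⌋₊)
    (by rw [Fintype.card_fin]; omega)
  rw [Fintype.card_fin, Fintype.card_prod, Fintype.card_fin, ← sq] at hcount
  refine hcount.trans (choose_mul_div_pow_add_one_sub_pow_le hY (by positivity) hbal₁ hbal₂ hmY
    ?_ (Nat.lt_floor_add_one N))
  linarith [min_le_right ((Y : ℝ) / 3) (c * (U : ℝ) ^ 2 / 3)]

/-- Fix a `c`-balanced target function `a` with balanced partition `W₁, W₂` of
its range, and a fixed `U × U` submatrix position pattern. If the `U²` entries of the submatrix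
`S` are i.i.d. uniform over an alphabet of size `Y`, then the probability that `S` is a valid
zero-error code for `a` (the values of `S` on `a⁻¹(W₁)` and on `a⁻¹(W₂)` are disjoint) is at most
`2·exp(-min{cU²/6, c²U⁴/(3Y)})`. -/
theorem valid_code_probability
    (U Y W : ℕ) (hY : 0 < Y) (c : ℝ) (hc0 : 0 < c) (hc1 : c ≤ 1 / 2)
    (a : Fin U → Fin U → Fin W)
    (W₁ W₂ : Finset (Fin W)) (hdisj : Disjoint W₁ W₂) (hunion : W₁ ∪ W₂ = Finset.univ)
    (hbal₁ : c * (U : ℝ) ^ 2 ≤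
      ((Finset.univ.filter (fun p : Fin U × Fin U => a p.1 p.2 ∈ W₁)).card : ℝ))
    (hbal₂ : c * (U : ℝ) ^ 2 ≤
      ((Finset.univ.filter (fun p : Fin U × Fin U => a p.1 p.2 ∈ W₂)).card : ℝ)) :
    (Nat.card {S : Fin U × Fin U → Fin Y //
        Disjoint
          ((Finset.univ.filter (fun p : Fin U × Fin U => a p.1 p.2 ∈ W₁)).image S)
          ((Finset.univ.filter (fun p : Fin U × Fin U => a p.1 p.2 ∈ W₂)).image S)} : ℝ) /
        (Y : ℝ) ^ (U ^ 2) ≤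
      2 * Real.exp (-(min (c * (U : ℝ) ^ 2 / 6) (c ^ 2 * (U : ℝ) ^ 4 / (3 * (Y : ℝ))))) :=
  valid_code_probability_general U Y W hY c hc0 a W₁ W₂ hdisj hunion hbal₁ hbal₂
end

section
/- Fix 0 < δ < 1 − 1/W and a fixed matrix A_δ ∈ W^{V₁×V₂} with V₁,V₂ ≤ U. Let A be a U×U random matrix with entries i.i.d. uniform over a set of size W. Then the probability that A_δ is a δ-approximation of A is at most exp(2U ln U − αU²), where α = (1−δ)ln(W(1−δ)) − (1−δ). -/
open Finset Real

/-!
A `δ`-approximation of `A` by `A_δ` means that `A`, viewed as a word indexed by `U × U`, lies in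
the Hamming ball of radius `δU²` around one of the at most `U^{2U}` words
`(u₁, u₂) ↦ A_δ (f₁ u₁) (f₂ u₂)`. Each such ball is small by a Chernoff bound: weighting a word by
`x ^ (number of agreements)` sums to `(x + W - 1)^{U²}` over all words, so with `x = W(1 - δ)` a
ball holds at most `(W e^{1-δ})^{U²} / x^{(1-δ)U²} = W^{U²} e^{-αU²}` words. A union bound over the
pairs `(f₁, f₂)` finishes the proof.
-/

section HammingBall

variable {ι β : Type*} [Fintype ι] [DecidableEq ι] [Fintype β] [DecidableEq β]

theorem sum_ite_eq_add_card_sub_one {R : Type*} [CommRing R] (b : β) (x : R) :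
    ∑ w : β, (if w = b then x else 1) = x + Fintype.card β - 1 := by
  rw [Finset.sum_ite, sum_const, sum_const, filter_eq', filter_ne', if_pos (mem_univ b),
    card_singleton, card_erase_of_mem (mem_univ b), card_univ, one_smul, nsmul_one,
    Nat.cast_sub (Fintype.card_pos_iff.2 ⟨b⟩), Nat.cast_one]
  ring

theorem sum_pow_card_filter_eq_eq {R : Type*} [CommRing R] (B : ι → β) (x : R) :
    ∑ A : ι → β, x ^ #{i | A i = B i} = (x + Fintype.card β - 1) ^ Fintype.card ι := by
  calc ∑ A : ι → β, x ^ #{i | A i = B i}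
      = ∑ A : ι → β, ∏ i, (if A i = B i then x else 1) := by
        simp only [prod_ite, prod_const, one_pow, mul_one]
    _ = ∏ i, ∑ w : β, (if w = B i then x else 1) := by
        rw [prod_univ_sum, Fintype.piFinset_univ]
    _ = (x + Fintype.card β - 1) ^ Fintype.card ι := by
        simp only [sum_ite_eq_add_card_sub_one, prod_const, card_univ]

theorem card_hammingDist_le_mul_rpow_le (B : ι → β) {x : ℝ} (hx : 1 ≤ x) (t : ℝ) :
    #{A : ι → β | (hammingDist A B : ℝ) ≤ t} * x ^ (Fintype.card ι - t) ≤
      (x + Fintype.card β - 1) ^ Fintype.card ι := by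
  have hagree (A : ι → β) :
      (#{i | A i = B i} : ℝ) = Fintype.card ι - hammingDist A B := by
    rw [eq_sub_iff_add_eq, hammingDist, ← Nat.cast_add, card_filter_add_card_filter_not,
      card_univ]
  calc #{A : ι → β | (hammingDist A B : ℝ) ≤ t} * x ^ (Fintype.card ι - t)
      ≤ ∑ A ∈ {A : ι → β | (hammingDist A B : ℝ) ≤ t}, x ^ #{i | A i = B i} := by
        rw [← nsmul_eq_mul]
        refine card_nsmul_le_sum _ _ _ fun A hA => ?_
        rw [← Real.rpow_natCast, hagree]
        exact Real.rpow_le_rpow_of_exponent_le hx (by linarith [(mem_filter.1 hA).2])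
    _ ≤ ∑ A : ι → β, x ^ #{i | A i = B i} :=
        sum_le_univ_sum_of_nonneg fun A => by positivity
    _ = (x + Fintype.card β - 1) ^ Fintype.card ι := sum_pow_card_filter_eq_eq B x

theorem card_hammingBall_le [Nonempty β] (B : ι → β) {δ : ℝ}
    (hδ : 1 / Fintype.card β < 1 - δ) :
    (#{A : ι → β | (hammingDist A B : ℝ) ≤ δ * Fintype.card ι} : ℝ) ≤
      Fintype.card β ^ Fintype.card ι *
        exp (-((1 - δ) * log (Fintype.card β * (1 - δ)) - (1 - δ)) * Fintype.card ι) := by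
  set W : ℝ := (Fintype.card β : ℝ)
  set n : ℝ := (Fintype.card ι : ℝ)
  have hW : 0 < W := by simp only [W, Nat.cast_pos, Fintype.card_pos]
  have hlam : 1 < W * (1 - δ) := by rwa [div_lt_iff₀' hW] at hδ
  have hbase : W * (1 - δ) + W - 1 ≤ W * exp (1 - δ) := by
    nlinarith [add_one_le_exp (1 - δ)]
  have hmarkov := card_hammingDist_le_mul_rpow_le B hlam.le (δ * n)
  rw [← le_div_iff₀ (by positivity)] at hmarkov
  calc _ ≤ (W * (1 - δ) + W - 1) ^ Fintype.card ι / (W * (1 - δ)) ^ (n - δ * n) := hmarkov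
    _ ≤ (W * exp (1 - δ)) ^ Fintype.card ι / (W * (1 - δ)) ^ (n - δ * n) := by
        gcongr
        linarith
    _ = W ^ Fintype.card ι * exp (-((1 - δ) * log (W * (1 - δ)) - (1 - δ)) * n) := by
        rw [rpow_def_of_pos (by linarith), mul_pow, ← exp_nat_mul, mul_div_assoc, ← exp_sub]
        congr 2
        ring

theorem card_filter_exists_le_sum {α κ : Type*} [Fintype κ] (s : Finset α) (P : κ → α → Prop)
    [∀ k, DecidablePred (P k)] [DecidablePred fun a => ∃ k, P k a] :
    #{a ∈ s | ∃ k, P k a} ≤ ∑ k, #{a ∈ s | P k a} := by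
  classical
  refine (card_le_card fun a ha => ?_).trans card_biUnion_le
  obtain ⟨has, k, hk⟩ := mem_filter.1 ha
  exact mem_biUnion.2 ⟨k, mem_univ k, mem_filter.2 ⟨has, hk⟩⟩

theorem card_exists_hammingBall_le {κ : Type*} [Fintype κ] [Nonempty β] (B : κ → ι → β) {δ : ℝ}
    (hδ : 1 / Fintype.card β < 1 - δ) :
    (#{A : ι → β | ∃ k, (hammingDist A (B k) : ℝ) ≤ δ * Fintype.card ι} : ℝ) ≤
      Fintype.card κ * (Fintype.card β ^ Fintype.card ι *
        exp (-((1 - δ) * log (Fintype.card β * (1 - δ)) - (1 - δ)) * Fintype.card ι)) := by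
  calc _ ≤ ∑ k, (#{A : ι → β | (hammingDist A (B k) : ℝ) ≤ δ * Fintype.card ι} : ℝ) :=
        (Nat.cast_le.2 (card_filter_exists_le_sum _ _)).trans_eq (Nat.cast_sum _ _)
    _ ≤ _ := by
        rw [← nsmul_eq_mul, ← card_univ]
        exact sum_le_card_nsmul _ _ _ fun k _ => card_hammingBall_le (B k) hδ

end HammingBall

theorem natCast_pow_self_eq_exp (n : ℕ) : (n : ℝ) ^ n = exp (n * log n) := by
  rcases n.eq_zero_or_pos with rfl | hn
  · simp
  · rw [← rpow_natCast, rpow_def_of_pos (by positivity), mul_comm]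

theorem approximation_probability_general
    (U W V₁ V₂ : ℕ) (hW : 0 < W) (hV₁ : V₁ ≤ U) (hV₂ : V₂ ≤ U)
    (δ : ℝ) (hδ1 : δ < 1 - 1 / (W : ℝ))
    (Aδ : Fin V₁ → Fin V₂ → Fin W)
    (α : ℝ) (hα : α = (1 - δ) * Real.log ((W : ℝ) * (1 - δ)) - (1 - δ)) :
    (Nat.card {A : Fin U → Fin U → Fin W //
        ∃ (f₁ : Fin U → Fin V₁) (f₂ : Fin U → Fin V₂),
          ((Finset.univ.filter
              (fun p : Fin U × Fin U => A p.1 p.2 ≠ Aδ (f₁ p.1) (f₂ p.2))).card : ℝ)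
            ≤ δ * (U : ℝ) ^ 2} : ℝ) / (W : ℝ) ^ (U ^ 2) ≤
      Real.exp (2 * (U : ℝ) * Real.log U - α * (U : ℝ) ^ 2) := by
  have : Nonempty (Fin W) := ⟨⟨0, hW⟩⟩
  have hball := card_exists_hammingBall_le (ι := Fin U × Fin U)
    (fun (f : (Fin U → Fin V₁) × (Fin U → Fin V₂)) p => Aδ (f.1 p.1) (f.2 p.2)) (δ := δ)
    (by rw [Fintype.card_fin]; linarith)
  simp only [Fintype.card_prod, Fintype.card_fun, Fintype.card_fin, ← sq, Nat.cast_mul,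
    Nat.cast_pow, ← hα] at hball
  have hmaps : (V₁ : ℝ) ^ U * V₂ ^ U ≤ exp (2 * U * log U) := by
    calc (V₁ : ℝ) ^ U * V₂ ^ U ≤ U ^ U * U ^ U := by gcongr
      _ = exp (2 * U * log U) := by rw [natCast_pow_self_eq_exp, ← exp_add]; ring_nf
  rw [div_le_iff₀ (by positivity)]
  calc _ = _ := congrArg Nat.cast ((Nat.card_congr
          ((Equiv.curry _ _ _).symm.subtypeEquiv fun A => ?_)).trans (Nat.card_eq_finsetCard _))
    _ ≤ _ := hball
    _ ≤ exp (2 * U * log U) * (W ^ (U ^ 2) * exp (-α * U ^ 2)) := by gcongr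
    _ = _ := by rw [sub_eq_add_neg, exp_add, neg_mul]; ring
  simp only [mem_filter, mem_univ, true_and, Prod.exists]
  -- the two sides differ only in the decidability instances of the filters
  rfl

/-- Fix `0 < δ < 1 - 1/W` and a matrix `A_δ ∈ W^{V₁×V₂}` with `V₁, V₂ ≤ U`.
For a `U × U` random matrix `A` with entries i.i.d. uniform over an alphabet of size `W`, the
probability that `A_δ` is a `δ`-approximation of `A` is at most `exp(2U ln U - αU²)` with
`α = (1-δ)ln(W(1-δ)) - (1-δ)`. -/
theorem approximation_probability
    (U W V₁ V₂ : ℕ) (hW : 0 < W) (hV₁ : V₁ ≤ U) (hV₂ : V₂ ≤ U)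
    (δ : ℝ) (hδ0 : 0 < δ) (hδ1 : δ < 1 - 1 / (W : ℝ))
    (Aδ : Fin V₁ → Fin V₂ → Fin W)
    (α : ℝ) (hα : α = (1 - δ) * Real.log ((W : ℝ) * (1 - δ)) - (1 - δ)) :
    (Nat.card {A : Fin U → Fin U → Fin W //
        ∃ (f₁ : Fin U → Fin V₁) (f₂ : Fin U → Fin V₂),
          ((Finset.univ.filter
              (fun p : Fin U × Fin U => A p.1 p.2 ≠ Aδ (f₁ p.1) (f₂ p.2))).card : ℝ)
            ≤ δ * (U : ℝ) ^ 2} : ℝ) / (W : ℝ) ^ (U ^ 2) ≤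
      Real.exp (2 * (U : ℝ) * Real.log U - α * (U : ℝ) ^ 2) :=
  approximation_probability_general U W V₁ V₂ hW hV₁ hV₂ δ hδ1 Aδ α hα
end
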